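/- arXiv:2207.07972 — 2 statements merged into one kernel-verified Lean document; each statement's English description precedes it below -/
import Mathlib

section
/- Let a_1 ≤ a_2 ≤ ⋯ ≤ a_n be the order statistics of n i.i.d. samples f(θ + G_i) where G_i ~ N(0, σ²I), and let q ∈ (0,1). If k is chosen so that P[Bin(n, q) ≥ k] ≥ c, then with probability at least c, a_k ≤ h̲_q(θ). (Correctness of the Monte Carlo lower bound on the percentile-smoothed value used in Algorithm 2.) -/
open MeasureTheory ProbabilityTheory Filter

section Tail
open Finset

noncomputable def binTail (n k : ℕ) (p : ℝ) : ℝ :=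
  ∑ j ∈ Finset.Icc k n, (n.choose j : ℝ) * p ^ j * (1 - p) ^ (n - j)

lemma tele (g : ℕ → ℝ) (k : ℕ) : ∀ n, k ≤ n →
    ∑ j ∈ Finset.Icc k n, (g j - g (j+1)) = g k - g (n+1) := by
  intro n
  induction n with
  | zero => intro h; interval_cases k; simp
  | succ m ih =>
    intro h
    rcases Nat.lt_or_ge m k with h1 | h1
    · have : k = m + 1 := le_antisymm h h1
      subst this; simp
    · rw [Finset.sum_Icc_succ_top (by omega), ih h1]; ring

lemma hasDerivAt_binTail (n k : ℕ) (hk : 1 ≤ k) (hkn : k ≤ n) (p : ℝ) :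
    HasDerivAt (binTail n k) ((n.choose k : ℝ) * k * p ^ (k-1) * (1-p) ^ (n-k)) p := by
  set a : ℕ → ℝ := fun j => (n.choose j : ℝ) * j * p ^ (j-1) * (1-p) ^ (n-j) with ha
  have key : ∀ j ∈ Finset.Icc k n, HasDerivAt (fun p => (n.choose j : ℝ) * p ^ j * (1 - p) ^ (n - j))
      (a j - a (j+1)) p := by
    intro j hj
    simp only [Finset.mem_Icc] at hj
    have h1 : HasDerivAt (fun p : ℝ => p ^ j) (j * p ^ (j-1)) p := by
      simpa using hasDerivAt_pow j p
    have h2 : HasDerivAt (fun p : ℝ => (1 - p) ^ (n - j)) (-((n-j : ℕ) * (1-p) ^ (n-j-1))) p := by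
      have hi : HasDerivAt (fun p : ℝ => 1 - p) (-1) p := by
        simpa using (hasDerivAt_id p).const_sub 1
      simpa [mul_comm, Function.comp_def] using (hasDerivAt_pow (n-j) (1-p)).comp p hi
    have := ((h1.const_mul ((n.choose j : ℝ))).fun_mul h2)
    refine this.congr_deriv (Eq.symm ?_)
    have hc : ((n.choose (j+1)) * (j+1) : ℝ) = (n.choose j : ℝ) * ((n - j : ℕ) : ℝ) := by
      exact_mod_cast congrArg (Nat.cast (R := ℝ)) (Nat.choose_succ_right_eq n j)
    simp only [ha, Nat.add_sub_cancel]
    rcases Nat.eq_or_lt_of_le hj.2 with h | h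
    · subst h; simp [Nat.choose_succ_self]
    · have e2 : n - j = (n - (j+1)) + 1 := by omega
      have e3 : n - j - 1 = n - (j+1) := by omega
      rw [e2]
      simp only [Nat.add_sub_cancel]
      rw [pow_succ]
      push_cast [Nat.cast_sub hj.2, Nat.cast_sub (show j+1 ≤ n by omega)] at hc ⊢
      linear_combination (-(p^j * (1-p)^(n-(j+1)))) * hc
  have := HasDerivAt.fun_sum key
  have htel : ∑ j ∈ Finset.Icc k n, (a j - a (j+1)) = a k - a (n+1) := tele a k n hkn
  have han : a (n+1) = 0 := by simp [ha, Nat.choose_succ_self]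
  rw [htel, han, sub_zero] at this
  exact this

lemma binTail_mono (n k : ℕ) (hk : 1 ≤ k) (hkn : k ≤ n) :
    MonotoneOn (binTail n k) (Set.Icc (0:ℝ) 1) := by
  apply monotoneOn_of_deriv_nonneg (convex_Icc 0 1)
  · exact fun x _ => (hasDerivAt_binTail n k hk hkn x).continuousAt.continuousWithinAt
  · exact fun x _ => (hasDerivAt_binTail n k hk hkn x).differentiableAt.differentiableWithinAt
  · intro x hx
    rw [interior_Icc] at hx
    rw [(hasDerivAt_binTail n k hk hkn x).deriv]
    have h1 : (0:ℝ) ≤ x := le_of_lt hx.1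
    have h2 : (0:ℝ) ≤ 1 - x := by linarith [hx.2]
    positivity

end Tail


lemma q_le_measure_sSup {Ω : Type*} [MeasurableSpace Ω] (μ : Measure Ω) [IsProbabilityMeasure μ]
    (φ : Ω → ℝ) (hφ : Measurable φ) (q : ℝ) (hq0 : 0 ≤ q) (hq1 : q < 1) :
    q ≤ (μ {g | φ g ≤ sSup {y : ℝ | (μ {g | φ g ≤ y}).toReal ≤ q}}).toReal := by
  set S : Set ℝ := {y : ℝ | (μ {g | φ g ≤ y}).toReal ≤ q} with hS
  set h : ℝ := sSup S with hh
  have hmono : ∀ {y y' : ℝ}, y ≤ y' → μ {g | φ g ≤ y} ≤ μ {g | φ g ≤ y'} :=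
    fun hyy => measure_mono fun g hg => le_trans hg hyy
  -- there exists y0 with q < toReal(μ {φ ≤ y0})
  obtain ⟨m0, hm0⟩ : ∃ m : ℕ, ENNReal.ofReal q < μ {g | φ g ≤ (m : ℝ)} := by
    have hun : (⋃ m : ℕ, {g | φ g ≤ (m : ℝ)}) = Set.univ := by
      ext g; simp only [Set.mem_iUnion, Set.mem_setOf_eq, Set.mem_univ, iff_true]
      exact exists_nat_ge (φ g)
    have ht : Tendsto (fun m : ℕ => μ {g | φ g ≤ (m : ℝ)}) atTop (nhds 1) := by
      have := tendsto_measure_iUnion_atTop (μ := μ)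
        (s := fun m : ℕ => {g | φ g ≤ (m : ℝ)})
        (fun m m' hmm => by
          intro g hg
          simp only [Set.mem_setOf_eq] at hg ⊢
          exact le_trans hg (by exact_mod_cast hmm))
      rw [hun] at this
      simpa [Function.comp_def] using this
    have hlt : ENNReal.ofReal q < 1 := ENNReal.ofReal_lt_one.mpr hq1
    have := ht.eventually (eventually_gt_nhds hlt)
    exact this.exists
  have hbdd : BddAbove S := by
    refine ⟨m0, fun y hy => ?_⟩
    by_contra hc
    push_neg at hc
    have : μ {g | φ g ≤ (m0 : ℝ)} ≤ μ {g | φ g ≤ y} := hmono hc.le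
    have hq' : q < (μ {g | φ g ≤ y}).toReal :=
      (ENNReal.ofReal_lt_iff_lt_toReal hq0 (measure_ne_top μ _)).mp (lt_of_lt_of_le hm0 this)
    exact absurd hy (by simp [hS]; linarith)
  have key : ∀ y, h < y → q < (μ {g | φ g ≤ y}).toReal := by
    intro y hy
    by_contra hc
    push_neg at hc
    exact absurd (le_csSup hbdd hc) (not_le.mpr hy)
  have hInter : (⋂ m : ℕ, {g | φ g ≤ h + 1 / ((m : ℝ) + 1)}) = {g | φ g ≤ h} := by
    ext g
    simp only [Set.mem_iInter, Set.mem_setOf_eq]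
    constructor
    · intro hg
      by_contra hgt
      push_neg at hgt
      obtain ⟨m, hm⟩ := exists_nat_one_div_lt (show (0:ℝ) < φ g - h by linarith)
      have := hg m
      linarith
    · intro hg m
      have : (0:ℝ) < 1 / ((m : ℝ) + 1) := by positivity
      linarith
  have hanti : Antitone fun m : ℕ => {g | φ g ≤ h + 1 / ((m : ℝ) + 1)} := by
    intro m m' hmm g hg
    simp only [Set.mem_setOf_eq] at hg ⊢
    have : 1 / ((m' : ℝ) + 1) ≤ 1 / ((m : ℝ) + 1) := by
      apply one_div_le_one_div_of_le
      · positivity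
      · exact_mod_cast add_le_add_left (Nat.cast_le.mpr hmm) 1
    linarith
  have ht : Tendsto (fun m : ℕ => μ {g | φ g ≤ h + 1 / ((m : ℝ) + 1)}) atTop
      (nhds (μ {g | φ g ≤ h})) := by
    have := tendsto_measure_iInter_atTop (μ := μ)
      (s := fun m : ℕ => {g | φ g ≤ h + 1 / ((m : ℝ) + 1)})
      (fun m => (hφ measurableSet_Iic).nullMeasurableSet) hanti ⟨0, measure_ne_top μ _⟩
    rw [hInter] at this
    simpa [Function.comp_def] using this
  have hlb : ∀ m : ℕ, ENNReal.ofReal q ≤ μ {g | φ g ≤ h + 1 / ((m : ℝ) + 1)} := by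
    intro m
    rw [ENNReal.ofReal_le_iff_le_toReal (measure_ne_top μ _)]
    have hpos : (0:ℝ) < 1 / ((m : ℝ) + 1) := by positivity
    exact (key _ (by linarith)).le
  have := ge_of_tendsto ht (Eventually.of_forall hlb)
  rwa [ENNReal.ofReal_le_iff_le_toReal (measure_ne_top μ _)] at this


open scoped Classical in
lemma pi_count_ge {Ω : Type*} [MeasurableSpace Ω] (μ : Measure Ω) [IsProbabilityMeasure μ]
    (A : Set Ω) (hA : MeasurableSet A) (n k : ℕ) :
    (Measure.pi fun _ : Fin n => μ)
        {G : Fin n → Ω | k ≤ (Finset.univ.filter fun i => G i ∈ A).card}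
      = ∑ j ∈ Finset.Icc k n, (n.choose j : ENNReal) * (μ A)^j * (μ Aᶜ)^(n-j) := by
  set E : Finset (Fin n) → Set (Fin n → Ω) :=
    fun s => Set.univ.pi fun i => if i ∈ s then A else Aᶜ with hEdef
  have hE : ∀ s, E s = {G : Fin n → Ω | (Finset.univ.filter fun i => G i ∈ A) = s} := by
    intro s; ext G
    simp only [hEdef, Set.mem_pi, Set.mem_univ, true_implies, Set.mem_setOf_eq]
    constructor
    · intro hG; ext i
      simp only [Finset.mem_filter, Finset.mem_univ, true_and]
      have := hG i
      by_cases hi : i ∈ s <;> simp [hi] at this ⊢ <;> tauto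
    · rintro rfl i
      by_cases h : G i ∈ A <;> simp [h]
  set S : Finset (Finset (Fin n)) := Finset.univ.powerset.filter fun s => k ≤ s.card with hSdef
  have hcover : {G : Fin n → Ω | k ≤ (Finset.univ.filter fun i => G i ∈ A).card}
      = ⋃ s ∈ S, E s := by
    ext G
    simp only [Set.mem_setOf_eq, Set.mem_iUnion, hE, hSdef, Finset.mem_filter,
      Finset.mem_powerset, exists_prop]
    constructor
    · intro h; exact ⟨_, ⟨Finset.subset_univ _, h⟩, rfl⟩
    · rintro ⟨s, ⟨-, hs⟩, rfl⟩; exact hs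
  have hEmeas : ∀ s, MeasurableSet (E s) := by
    intro s
    apply MeasurableSet.univ_pi
    intro i; by_cases hi : i ∈ s <;> simp [hi, hA, hA.compl]
  have hdisj : (↑S : Set (Finset (Fin n))).PairwiseDisjoint E := by
    intro s _ t _ hst
    refine Set.disjoint_left.mpr fun G hGs hGt => hst ?_
    rw [hE] at hGs hGt
    rw [← hGs, ← hGt]
  have hmeasE : ∀ s : Finset (Fin n),
      (Measure.pi fun _ : Fin n => μ) (E s) = (μ A) ^ s.card * (μ Aᶜ) ^ (n - s.card) := by
    intro s
    rw [hEdef]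
    rw [Measure.pi_pi]
    have : ∀ i, μ (if i ∈ s then A else Aᶜ) = if i ∈ s then μ A else μ Aᶜ :=
      fun i => apply_ite μ _ _ _
    simp_rw [this]
    rw [Finset.prod_ite, Finset.prod_const, Finset.prod_const]
    congr 1
    · congr 1
      simp
    · congr 1
      have : Finset.univ.filter (fun i => ¬ i ∈ s) = sᶜ := by ext i; simp
      rw [this, Finset.card_compl, Fintype.card_fin]
  rw [hcover, measure_biUnion_finset hdisj (fun s _ => hEmeas s)]
  simp_rw [hmeasE]
  have hSbi : S = (Finset.Icc k n).biUnion fun j => Finset.powersetCard j Finset.univ := by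
    ext s
    simp only [hSdef, Finset.mem_filter, Finset.mem_powerset, Finset.mem_biUnion,
      Finset.mem_Icc, Finset.mem_powersetCard]
    constructor
    · intro ⟨h1, h2⟩
      exact ⟨s.card, ⟨h2, by simpa using Finset.card_le_card h1⟩, h1, rfl⟩
    · rintro ⟨j, ⟨hj1, -⟩, -, rfl⟩
      exact ⟨Finset.subset_univ _, hj1⟩
  rw [hSbi, Finset.sum_biUnion]
  · apply Finset.sum_congr rfl
    intro j hj
    rw [Finset.sum_congr rfl (fun s hs => ?_), Finset.sum_const, Finset.card_powersetCard,
      Finset.card_univ, Fintype.card_fin, nsmul_eq_mul, mul_assoc]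
    rw [(Finset.mem_powersetCard.mp hs).2]
  · intro x _ y _ hxy
    simp only [Function.onFun]
    refine Finset.disjoint_left.mpr fun s hs hs' => hxy ?_
    rw [← (Finset.mem_powersetCard.mp hs).2, ← (Finset.mem_powersetCard.mp hs').2]

open MeasureTheory ProbabilityTheory

noncomputable def gaussVec (d : ℕ) (σ : ℝ) : Measure (EuclideanSpace ℝ (Fin d)) :=
  (Measure.pi fun _ : Fin d => gaussianReal 0 (⟨σ ^ 2, sq_nonneg σ⟩ : NNReal)).map
    (MeasurableEquiv.toLp 2 (Fin d → ℝ))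

/-- Standard Gaussian CDF Φ. -/
noncomputable def Phi : ℝ → ℝ := fun x => cdf (gaussianReal 0 1) x

/-- Inverse of the standard Gaussian CDF. -/
noncomputable def PhiInv : ℝ → ℝ := Function.invFun Phi

/-- Lower percentile smoothing. -/
noncomputable def lowerPct {d : ℕ} (μ : Measure (EuclideanSpace ℝ (Fin d)))
    (f : EuclideanSpace ℝ (Fin d) → ℝ) (p : ℝ) (x : EuclideanSpace ℝ (Fin d)) : ℝ :=
  sSup {y : ℝ | (μ {g | f (x + g) ≤ y}).toReal ≤ p}

/-- Upper percentile smoothing. -/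
noncomputable def upperPct {d : ℕ} (μ : Measure (EuclideanSpace ℝ (Fin d)))
    (f : EuclideanSpace ℝ (Fin d) → ℝ) (p : ℝ) (x : EuclideanSpace ℝ (Fin d)) : ℝ :=
  sInf {y : ℝ | p ≤ (μ {g | f (x + g) ≤ y}).toReal}

instance gaussVec_prob (d : ℕ) (σ : ℝ) : IsProbabilityMeasure (gaussVec d σ) := by
  unfold gaussVec
  have := fun _ : Fin d => instIsProbabilityMeasureGaussianReal 0 ⟨σ ^ 2, sq_nonneg σ⟩
  exact Measure.isProbabilityMeasure_map (MeasurableEquiv.measurable _).aemeasurable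

open scoped Classical in
theorem monte_carlo_lower_bound (d n k : ℕ) (σ q c : ℝ) (hσ : 0 < σ)
    (hq : q ∈ Set.Ioo (0 : ℝ) 1) (hk : 1 ≤ k) (hkn : k ≤ n)
    (f : EuclideanSpace ℝ (Fin d) → ℝ) (hf : Measurable f)
    (θ : EuclideanSpace ℝ (Fin d))
    (hc : c ≤ ∑ j ∈ Finset.Icc k n, (n.choose j : ℝ) * q ^ j * (1 - q) ^ (n - j)) :
    c ≤ ((Measure.pi fun _ : Fin n => gaussVec d σ)
        {G : Fin n → EuclideanSpace ℝ (Fin d) |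
          k ≤ (Finset.univ.filter fun i : Fin n =>
            f (θ + G i) ≤ lowerPct (gaussVec d σ) f q θ).card}).toReal := by
  set μ := gaussVec d σ with hμ
  set h : ℝ := lowerPct μ f q θ with hh
  set φ : EuclideanSpace ℝ (Fin d) → ℝ := fun g => f (θ + g) with hφdef
  have hφ : Measurable φ := hf.comp (measurable_id.const_add θ)
  set A : Set (EuclideanSpace ℝ (Fin d)) := {g | φ g ≤ h} with hA
  have hAmeas : MeasurableSet A := hφ measurableSet_Iic
  set p : ℝ := (μ A).toReal with hp
  have hp1 : p ≤ 1 := by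
    rw [hp]
    exact ENNReal.toReal_le_of_le_ofReal zero_le_one (by simpa using prob_le_one)
  have hqp : q ≤ p := by
    have := q_le_measure_sSup μ φ hφ q hq.1.le hq.2
    simpa [hp, hA, hh, lowerPct, hφdef] using this
  -- the event in the statement equals the counting event for A
  have hsets : {G : Fin n → EuclideanSpace ℝ (Fin d) |
        k ≤ (Finset.univ.filter fun i : Fin n => f (θ + G i) ≤ h).card}
      = {G : Fin n → EuclideanSpace ℝ (Fin d) |
        k ≤ (Finset.univ.filter fun i : Fin n => G i ∈ A).card} := by
    ext G
    simp only [Set.mem_setOf_eq]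
    constructor <;> intro hG <;>
      [exact le_trans hG (le_of_eq (congrArg Finset.card (Finset.filter_congr fun i _ => Iff.rfl)));
       exact le_trans hG (le_of_eq (congrArg Finset.card (Finset.filter_congr fun i _ => Iff.rfl)))]
  rw [hsets, pi_count_ge μ A hAmeas n k]
  have hcompl : μ Aᶜ = 1 - μ A := by
    rw [measure_compl hAmeas (measure_ne_top μ A), measure_univ]
  have htoReal : (∑ j ∈ Finset.Icc k n,
      (n.choose j : ENNReal) * (μ A)^j * (μ Aᶜ)^(n-j)).toReal = binTail n k p := by
    rw [ENNReal.toReal_sum (fun j _ => by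
      refine ENNReal.mul_ne_top (ENNReal.mul_ne_top ?_ ?_) ?_
      · exact ENNReal.natCast_ne_top _
      · exact ENNReal.pow_ne_top (measure_ne_top μ A)
      · exact ENNReal.pow_ne_top (by rw [hcompl]; exact ENNReal.sub_ne_top ENNReal.one_ne_top))]
    apply Finset.sum_congr rfl
    intro j _
    rw [ENNReal.toReal_mul, ENNReal.toReal_mul, ENNReal.toReal_pow, ENNReal.toReal_pow,
      ENNReal.toReal_natCast, hcompl,
      ENNReal.toReal_sub_of_le prob_le_one ENNReal.one_ne_top, ENNReal.toReal_one]
  rw [htoReal]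
  calc c ≤ binTail n k q := hc
    _ ≤ binTail n k p := binTail_mono n k hk hkn ⟨hq.1.le, hq.2.le⟩
        ⟨ENNReal.toReal_nonneg, hp1⟩ hqp
end

section
/- For G ~ N(0, σ²I) on ℝ^d and any δ ∈ ℝ^d with ‖δ‖₂ < ε, and any measurable set A ⊆ ℝ^d: if P[x + G ∈ A] ≥ p, then P[x + δ + G ∈ A] ≥ Φ(Φ⁻¹(p) − ε/σ). (The Neyman–Pearson shift bound for Gaussian measures used to prove the smoothing certificates.) -/
open MeasureTheory ProbabilityTheory

open Real Set Filter
open scoped ENNReal NNReal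

lemma lintegral_pi_prod {n : ℕ} (μ : Fin n → Measure ℝ) [∀ i, SigmaFinite (μ i)]
    (f : Fin n → ℝ → ℝ≥0∞) (hf : ∀ i, Measurable (f i)) :
    ∫⁻ g, ∏ i, f i (g i) ∂Measure.pi μ = ∏ i, ∫⁻ t, f i t ∂μ i := by
  induction n with
  | zero => simp [Measure.pi_of_empty]
  | succ n ih =>
    rw [← ((measurePreserving_piFinSuccAbove μ 0).symm).lintegral_comp_emb
      (MeasurableEquiv.measurableEmbedding _)]
    simp_rw [MeasurableEquiv.piFinSuccAbove_symm_apply, Fin.insertNthEquiv,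
      Fin.prod_univ_succ, Fin.insertNth_zero, Equiv.coe_fn_mk, Fin.cons_zero, Fin.cons_succ,
      Fin.zero_succAbove, cast_eq]
    rw [lintegral_prod_mul (f := fun t => f 0 t) (g := fun y : Fin n → ℝ => ∏ j : Fin n, f j.succ (y j))
      ((hf 0)).aemeasurable
      (Finset.measurable_prod _ fun j _ => ((hf j.succ).comp (measurable_pi_apply j))).aemeasurable,
      ih _ _ fun j => hf j.succ]

lemma ofReal_Phi (x : ℝ) : ENNReal.ofReal (Phi x) = gaussianReal 0 1 (Iic x) :=
  ofReal_cdf _ x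

lemma Phi_mono : Monotone Phi := (cdf (gaussianReal 0 1)).mono

lemma Phi_lipschitz_aux {x y : ℝ} (hxy : x ≤ y) :
    Phi y - Phi x ≤ (Real.sqrt (2 * π))⁻¹ * (y - x) := by
  have hC : (0:ℝ) ≤ (Real.sqrt (2 * π))⁻¹ := by positivity
  set μ := gaussianReal 0 1 with hμ
  have hsplit : μ (Iic y) = μ (Iic x) + μ (Ioc x y) := by
    rw [← measure_union (Iic_disjoint_Ioc le_rfl) measurableSet_Ioc, Iic_union_Ioc_eq_Iic hxy]
  have hPhi : Phi y - Phi x = (μ (Ioc x y)).toReal := by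
    show cdf _ y - cdf _ x = _
    rw [cdf_eq_real, cdf_eq_real, measureReal_def, measureReal_def, ← hμ, hsplit,
      ENNReal.toReal_add (measure_ne_top _ _) (measure_ne_top _ _)]
    ring
  have hbound : μ (Ioc x y) ≤ ENNReal.ofReal ((Real.sqrt (2 * π))⁻¹ * (y - x)) := by
    rw [hμ, gaussianReal_apply _ one_ne_zero]
    calc ∫⁻ t in Ioc x y, gaussianPDF 0 1 t
        ≤ ∫⁻ _ in Ioc x y, ENNReal.ofReal (Real.sqrt (2 * π))⁻¹ := by
          refine setLIntegral_mono measurable_const fun t _ => ?_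
          refine ENNReal.ofReal_le_ofReal ?_
          unfold gaussianPDFReal
          push_cast
          rw [mul_one]
          refine mul_le_of_le_one_right (by positivity) ?_
          rw [Real.exp_le_one_iff]
          have : (0:ℝ) ≤ (t - 0)^2 / 2 := by positivity
          linarith
      _ = ENNReal.ofReal (Real.sqrt (2 * π))⁻¹ * volume (Ioc x y) := by
          rw [setLIntegral_const]
      _ = ENNReal.ofReal ((Real.sqrt (2 * π))⁻¹ * (y - x)) := by
          rw [Real.volume_Ioc, ← ENNReal.ofReal_mul hC]
  rw [hPhi]
  exact ENNReal.toReal_le_of_le_ofReal (by nlinarith) hbound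

lemma Phi_continuous : Continuous Phi := by
  have hC : (0:ℝ) ≤ (Real.sqrt (2 * π))⁻¹ := by positivity
  refine (LipschitzWith.of_dist_le_mul (K := ⟨_, hC⟩) fun x y => ?_).continuous
  rw [Real.dist_eq, Real.dist_eq]
  rcases le_total x y with h | h
  · rw [abs_sub_comm, abs_of_nonneg (by linarith [Phi_mono h]), abs_sub_comm,
      abs_of_nonneg (by linarith)]
    exact Phi_lipschitz_aux h
  · rw [abs_of_nonneg (by linarith [Phi_mono h]), abs_of_nonneg (by linarith)]
    exact Phi_lipschitz_aux h

lemma Phi_PhiInv {p : ℝ} (hp : 0 < p) (hp1 : p < 1) : Phi (PhiInv p) = p := by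
  have hs : ∃ t, Phi t = p := by
    obtain ⟨a, ha⟩ := ((tendsto_cdf_atBot (gaussianReal 0 1)).eventually_lt_const hp).exists
    obtain ⟨b, hb⟩ := ((tendsto_cdf_atTop (gaussianReal 0 1)).eventually_const_lt hp1).exists
    exact intermediate_value_univ a b Phi_continuous ⟨le_of_lt ha, le_of_lt hb⟩
  exact Function.invFun_eq hs

lemma gaussianReal_Iic_eq (v : ℝ≥0) (hv : v ≠ 0) (x : ℝ) :
    gaussianReal 0 v (Iic x) = ENNReal.ofReal (Phi (x / Real.sqrt v)) := by
  have hv' : (0:ℝ) < (v:ℝ) := lt_of_le_of_ne v.coe_nonneg (by exact_mod_cast hv.symm)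
  have hs : (0:ℝ) < Real.sqrt v := Real.sqrt_pos.mpr hv'
  have hmap := gaussianReal_map_const_mul (μ := 0) (v := 1) (Real.sqrt v)
  have hvv : (NNReal.mk ((Real.sqrt v)^2) (sq_nonneg _)) * 1 = v := by
    ext; simp [Real.sq_sqrt v.coe_nonneg]
  rw [mul_zero, hvv] at hmap
  rw [← hmap, Measure.map_apply (measurable_const_mul _) measurableSet_Iic,
    Set.preimage_const_mul_Iic₀ _ hs, ofReal_Phi]

lemma gaussianReal_eq_withDensity (v : ℝ≥0) (hv : v ≠ 0) (c : ℝ) :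
    gaussianReal c v = (gaussianReal 0 v).withDensity
      (fun t => ENNReal.ofReal (Real.exp ((2*c*t - c^2) / (2*(v:ℝ))))) := by
  have hv' : (0:ℝ) < (v:ℝ) := lt_of_le_of_ne v.coe_nonneg (by exact_mod_cast hv.symm)
  have hmeas : Measurable fun t : ℝ => ENNReal.ofReal (Real.exp ((2*c*t - c^2) / (2*(v:ℝ)))) := by
    fun_prop
  rw [gaussianReal_of_var_ne_zero _ hv, gaussianReal_of_var_ne_zero _ hv,
    ← withDensity_mul _ (measurable_gaussianPDF 0 v) hmeas]
  congr 1
  ext t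
  rw [Pi.mul_apply, gaussianPDF, gaussianPDF, ← ENNReal.ofReal_mul (gaussianPDFReal_nonneg _ _ _)]
  congr 1
  unfold gaussianPDFReal
  rw [show rexp (-(t - c) ^ 2 / (2 * (v:ℝ))) =
      rexp (-(t - 0) ^ 2 / (2 * (v:ℝ))) * rexp ((2 * c * t - c ^ 2) / (2 * (v:ℝ))) from by
    rw [← Real.exp_add, ← add_div]; congr 1; ring, mul_assoc]
  ring

lemma measurable_add_vec {d : ℕ} (w : Fin d → ℝ) :
    Measurable fun g : Fin d → ℝ => g + w :=
  measurable_pi_lambda _ fun i => by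
    simpa using ((measurable_pi_apply i : Measurable fun g : Fin d → ℝ => g i).add_const (w i) : Measurable fun g : Fin d → ℝ => g i + w i)

lemma pi_map_add {d : ℕ} (v : ℝ≥0) (w : Fin d → ℝ) :
    (Measure.pi fun _ : Fin d => gaussianReal 0 v).map (· + w) =
      Measure.pi fun i => gaussianReal (w i) v := by
  refine (Measure.pi_eq (μ := fun i => gaussianReal (w i) v) fun s hs => ?_).symm
  rw [Measure.map_apply (measurable_add_vec w) (MeasurableSet.univ_pi hs)]
  have hpre : (· + w) ⁻¹' (univ.pi s) = univ.pi fun i => (· + w i) ⁻¹' (s i) := by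
    ext g; simp [Set.mem_pi]
  rw [hpre, Measure.pi_pi]
  refine Finset.prod_congr rfl fun i _ => ?_
  rw [← Measure.map_apply (measurable_add_const (w i)) (hs i),
    gaussianReal_map_add_const (w i), zero_add]

lemma pi_withDensity_eq {d : ℕ} (μ : Measure ℝ) [SigmaFinite μ] (ν : Fin d → Measure ℝ)
    [∀ i, SigmaFinite (ν i)] (f : Fin d → ℝ → ℝ≥0∞) (hf : ∀ i, Measurable (f i))
    (h : ∀ i, ν i = μ.withDensity (f i)) :
    Measure.pi ν = (Measure.pi fun _ : Fin d => μ).withDensity fun g => ∏ i, f i (g i) := by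
  refine Measure.pi_eq (μ := ν) fun s hs => ?_
  rw [withDensity_apply _ (MeasurableSet.univ_pi hs), ← lintegral_indicator (MeasurableSet.univ_pi hs)]
  have hind : (univ.pi s).indicator (fun g => ∏ i, f i (g i)) =
      fun g => ∏ i, (s i).indicator (f i) (g i) := by
    ext g
    by_cases hg : g ∈ univ.pi s
    · rw [indicator_of_mem hg]
      exact Finset.prod_congr rfl fun i _ => (indicator_of_mem (hg i (mem_univ i)) _).symm
    · rw [indicator_of_notMem hg]
      rw [Set.mem_univ_pi, not_forall] at hg
      obtain ⟨i, hi⟩ := hg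
      exact (Finset.prod_eq_zero (Finset.mem_univ i) (by rw [indicator_of_notMem hi])).symm
  rw [hind, lintegral_pi_prod _ _ fun i => (hf i).indicator (hs i)]
  exact Finset.prod_congr rfl fun i _ => by
    rw [h i, withDensity_apply _ (hs i), ← lintegral_indicator (hs i)]

lemma withDensity_map_equiv {α β : Type*} [MeasurableSpace α] [MeasurableSpace β]
    (e : α ≃ᵐ β) (μ : Measure α) {f : β → ℝ≥0∞} (hf : Measurable f) :
    (μ.withDensity fun a => f (e a)).map e = (μ.map e).withDensity f := by
  ext s hs
  rw [Measure.map_apply e.measurable hs, withDensity_apply _ (e.measurable hs),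
    withDensity_apply _ hs, MeasureTheory.setLIntegral_map hs hf e.measurable]

lemma vne {σ : ℝ} (hσ : 0 < σ) : (⟨σ ^ 2, sq_nonneg σ⟩ : ℝ≥0) ≠ 0 := by
  intro hc
  have := congrArg NNReal.toReal hc
  change σ ^ 2 = (0:ℝ) at this
  nlinarith

lemma measurable_coord {d : ℕ} (i : Fin d) :
    Measurable fun g : EuclideanSpace ℝ (Fin d) => g i :=
  (measurable_pi_apply i).comp (MeasurableEquiv.toLp 2 (Fin d → ℝ)).symm.measurable

lemma gaussVec_eq_prodDensity (d : ℕ) {σ : ℝ} (hσ : 0 < σ) :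
    gaussVec d σ = (volume : Measure (EuclideanSpace ℝ (Fin d))).withDensity
      fun g => ∏ i, gaussianPDF 0 (⟨σ ^ 2, sq_nonneg σ⟩ : ℝ≥0) (g i) := by
  have hf : Measurable fun g : EuclideanSpace ℝ (Fin d) =>
      ∏ i, gaussianPDF 0 (⟨σ ^ 2, sq_nonneg σ⟩ : ℝ≥0) (g i) :=
    Finset.measurable_prod _ fun i _ => (measurable_gaussianPDF _ _).comp (measurable_coord i)
  haveI : ∀ i : Fin d, SigmaFinite (gaussianReal 0 (⟨σ ^ 2, sq_nonneg σ⟩ : ℝ≥0)) := fun _ =>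
    inferInstanceAs (SigmaFinite (gaussianReal 0 (NNReal.mk (σ ^ 2) (sq_nonneg σ))))
  rw [gaussVec, @pi_withDensity_eq d volume _ _ this _ (fun _ => measurable_gaussianPDF 0 _)
      (fun _ => gaussianReal_of_var_ne_zero _ (vne hσ)), ← MeasureTheory.volume_pi,
    show ((volume : Measure (Fin d → ℝ)).withDensity fun g =>
        ∏ i, gaussianPDF 0 (⟨σ ^ 2, sq_nonneg σ⟩ : ℝ≥0) (g i)) =
      (volume : Measure (Fin d → ℝ)).withDensity (fun a =>
        (fun g : EuclideanSpace ℝ (Fin d) => ∏ i, gaussianPDF 0 (⟨σ ^ 2, sq_nonneg σ⟩ : ℝ≥0) (g i))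
          ((MeasurableEquiv.toLp 2 (Fin d → ℝ)) a)) from rfl,
    withDensity_map_equiv _ _ hf]
  rw [show Measure.map (⇑(MeasurableEquiv.toLp 2 (Fin d → ℝ)))
      (volume : Measure (Fin d → ℝ)) = volume from
    (MeasurePreserving.symm _ (EuclideanSpace.volume_preserving_symm_measurableEquiv_toLp (Fin d))).map_eq]

lemma prodDensity_eq_norm (d : ℕ) {σ : ℝ} (hσ : 0 < σ) :
    (fun g : EuclideanSpace ℝ (Fin d) =>
        ∏ i, gaussianPDF 0 (⟨σ ^ 2, sq_nonneg σ⟩ : ℝ≥0) (g i)) =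
      fun g => ENNReal.ofReal
        ((Real.sqrt (2 * π * σ ^ 2))⁻¹ ^ d * Real.exp (-‖g‖ ^ 2 / (2 * σ ^ 2))) := by
  funext g
  unfold gaussianPDF
  refine (ENNReal.ofReal_prod_of_nonneg fun i _ => gaussianPDFReal_nonneg _ _ _).symm.trans ?_
  congr 1
  unfold gaussianPDFReal
  rw [Finset.prod_mul_distrib, Finset.prod_const, Finset.card_univ, Fintype.card_fin,
    ← Real.exp_sum]
  have hn : ‖g‖ ^ 2 = ∑ i, g i ^ 2 := by
    rw [EuclideanSpace.norm_eq, Real.sq_sqrt (by positivity)]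
    exact Finset.sum_congr rfl fun i _ => by rw [Real.norm_eq_abs, sq_abs]
  rw [hn]
  simp only [sub_zero, NNReal.coe_mk, neg_div, mul_assoc]
  simp [neg_div, Finset.sum_div, Finset.sum_neg_distrib]
  rfl

lemma gaussVec_map_isometry (d : ℕ) {σ : ℝ} (hσ : 0 < σ)
    (T : EuclideanSpace ℝ (Fin d) ≃ₗᵢ[ℝ] EuclideanSpace ℝ (Fin d)) :
    (gaussVec d σ).map T = gaussVec d σ := by
  set f : EuclideanSpace ℝ (Fin d) → ℝ≥0∞ := fun g =>
    ENNReal.ofReal ((Real.sqrt (2 * π * σ ^ 2))⁻¹ ^ d * Real.exp (-‖g‖ ^ 2 / (2 * σ ^ 2)))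
    with hfdef
  have hf : Measurable f := by
    apply Measurable.ennreal_ofReal
    exact (continuous_const.mul (Real.continuous_exp.comp
      ((continuous_norm.pow 2).neg.div_const _))).measurable
  let eqv : EuclideanSpace ℝ (Fin d) ≃ᵐ EuclideanSpace ℝ (Fin d) :=
    T.toHomeomorph.toMeasurableEquiv
  have hcoe : (⇑eqv : EuclideanSpace ℝ (Fin d) → _) = ⇑T := rfl
  have hfT : (fun a => f (eqv a)) = f := by
    funext a
    simp only [hfdef]
    rw [show ‖eqv a‖ = ‖a‖ from T.norm_map a]
  rw [gaussVec_eq_prodDensity d hσ, prodDensity_eq_norm d hσ, ← hfdef]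
  calc (volume.withDensity f).map ⇑T
      = ((volume.withDensity fun a => f (eqv a)).map ⇑eqv) := by rw [hfT, hcoe]
    _ = (volume.map ⇑eqv).withDensity f := withDensity_map_equiv eqv _ hf
    _ = volume.withDensity f := by rw [hcoe, T.measurePreserving.map_eq]

lemma main_pi {d : ℕ} (v : ℝ≥0) (hv : v ≠ 0) (i₀ : Fin d) {c : ℝ} (hc : 0 ≤ c)
    {p : ℝ} (hp : 0 < p) (hp1 : p < 1) (B : Set (Fin d → ℝ)) (hB : MeasurableSet B)
    (hpB : ENNReal.ofReal p ≤ Measure.pi (fun _ : Fin d => gaussianReal 0 v) B) :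
    ENNReal.ofReal (Phi (PhiInv p - c / Real.sqrt v)) ≤
      Measure.pi (fun _ : Fin d => gaussianReal 0 v)
        ((fun g => g + fun i => if i = i₀ then c else 0) ⁻¹' B) := by
  have hv' : (0:ℝ) < (v:ℝ) := lt_of_le_of_ne v.coe_nonneg (by exact_mod_cast hv.symm)
  have hsv : (0:ℝ) < Real.sqrt v := Real.sqrt_pos.mpr hv'
  set w : Fin d → ℝ := fun i => if i = i₀ then c else 0 with hw
  set P := Measure.pi (fun _ : Fin d => gaussianReal 0 v) with hP
  set fdens : Fin d → ℝ → ℝ≥0∞ :=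
    fun i t => ENNReal.ofReal (Real.exp ((2*(w i)*t - (w i)^2) / (2*(v:ℝ)))) with hfdens
  have hfm : ∀ i, Measurable (fdens i) := fun i => by fun_prop
  set ρ : (Fin d → ℝ) → ℝ≥0∞ := fun g => ∏ i, fdens i (g i) with hρdef
  have hρm : Measurable ρ :=
    Finset.measurable_prod _ fun i _ => (hfm i).comp (measurable_pi_apply i)
  have hmap : P.map (· + w) = P.withDensity ρ := by
    rw [hP, pi_map_add, pi_withDensity_eq (gaussianReal 0 v) _ _ hfm
      (fun i => gaussianReal_eq_withDensity v hv (w i))]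
  set R : ℝ → ℝ≥0∞ := fun t => ENNReal.ofReal (Real.exp ((2*c*t - c^2) / (2*(v:ℝ)))) with hR
  have hρ_eq : ∀ g, ρ g = R (g i₀) := by
    intro g
    show ∏ i, fdens i (g i) = R (g i₀)
    rw [Finset.prod_eq_single i₀ (fun i _ hne => by simp [hfdens, hw, if_neg hne])
      (fun h => absurd (Finset.mem_univ i₀) h)]
    simp [hfdens, hw, hR]
  have hRmono : ∀ {s t : ℝ}, s ≤ t → R s ≤ R t := fun {s t} hst =>
    ENNReal.ofReal_le_ofReal (Real.exp_le_exp.mpr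
      ((div_le_div_iff_of_pos_right (by linarith)).mpr (by nlinarith)))
  set β : ℝ := Real.sqrt v * PhiInv p with hβ
  set H : Set (Fin d → ℝ) := {g | g i₀ ≤ β} with hH
  have hHm : MeasurableSet H := measurableSet_le (measurable_pi_apply i₀) measurable_const
  have hHbox : H = univ.pi fun i => if i = i₀ then Iic β else univ := by
    ext g
    simp only [hH, mem_setOf_eq, mem_univ_pi]
    constructor
    · intro hg i
      by_cases h : i = i₀
      · subst h; simp [hg]
      · simp [h]
    · intro hg
      simpa using hg i₀
  have hPH : P H = ENNReal.ofReal p := by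
    rw [hP, hHbox, Measure.pi_pi,
      Finset.prod_eq_single i₀ (fun i _ hne => by simp [if_neg hne])
        (fun h => absurd (Finset.mem_univ i₀) h), if_pos rfl,
      gaussianReal_Iic_eq v hv, hβ, mul_div_cancel_left₀ _ (ne_of_gt hsv), Phi_PhiInv hp hp1]
  have hPHB : P H ≤ P B := by rw [hPH]; exact hpB
  have hNP : P.withDensity ρ H ≤ P.withDensity ρ B := by
    have h1 : P.withDensity ρ (H \ B) ≤ R β * P (H \ B) := by
      rw [withDensity_apply _ (hHm.diff hB)]
      calc ∫⁻ g in H \ B, ρ g ∂P ≤ ∫⁻ _ in H \ B, R β ∂P :=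
            setLIntegral_mono measurable_const fun g hg => by
              rw [hρ_eq g]; exact hRmono hg.1
        _ = R β * P (H \ B) := setLIntegral_const _ _
    have h2 : R β * P (B \ H) ≤ P.withDensity ρ (B \ H) := by
      rw [withDensity_apply _ (hB.diff hHm)]
      calc R β * P (B \ H) = ∫⁻ _ in B \ H, R β ∂P := (setLIntegral_const _ _).symm
        _ ≤ ∫⁻ g in B \ H, ρ g ∂P :=
            setLIntegral_mono hρm fun g hg => by
              rw [hρ_eq g]; exact hRmono (le_of_not_ge hg.2)
    have hmd : P (H \ B) ≤ P (B \ H) := by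
      have h3 : P (H ∩ B) + P (H \ B) ≤ P (H ∩ B) + P (B \ H) := by
        rw [measure_inter_add_diff H hB, inter_comm H B, measure_inter_add_diff B hHm]
        exact hPHB
      exact (ENNReal.add_le_add_iff_left (measure_ne_top P _)).mp h3
    calc P.withDensity ρ H
        = P.withDensity ρ (H ∩ B) + P.withDensity ρ (H \ B) :=
          (measure_inter_add_diff H hB).symm
      _ ≤ P.withDensity ρ (H ∩ B) + R β * P (H \ B) := add_le_add_right h1 _
      _ ≤ P.withDensity ρ (H ∩ B) + R β * P (B \ H) :=
          add_le_add_right (mul_le_mul_right hmd _) _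
      _ ≤ P.withDensity ρ (H ∩ B) + P.withDensity ρ (B \ H) := add_le_add_right h2 _
      _ = P.withDensity ρ B := by
          rw [inter_comm H B]; exact measure_inter_add_diff B hHm
  have hτH : P.withDensity ρ H = ENNReal.ofReal (Phi (PhiInv p - c / Real.sqrt v)) := by
    have hshift := gaussianReal_map_add_const (μ := 0) (v := v) c
    rw [zero_add] at hshift
    rw [← hmap, hP, pi_map_add, hHbox, Measure.pi_pi,
      Finset.prod_eq_single i₀ (fun i _ hne => by simp [if_neg hne])
        (fun h => absurd (Finset.mem_univ i₀) h), if_pos rfl,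
      show w i₀ = c from if_pos rfl, ← hshift,
      Measure.map_apply (measurable_add_const c) measurableSet_Iic,
      preimage_add_const_Iic, gaussianReal_Iic_eq v hv, sub_div, hβ,
      mul_div_cancel_left₀ _ (ne_of_gt hsv)]
  have htarget : P ((fun g => g + w) ⁻¹' B) = P.withDensity ρ B := by
    rw [← hmap, Measure.map_apply (measurable_add_vec w) hB]
  rw [htarget, ← hτH]
  exact hNP

theorem gaussian_shift_bound (d : ℕ) (σ ε p : ℝ) (hσ : 0 < σ) (hε : 0 < ε)
    (hp : 0 < p) (hp1 : p < 1) (A : Set (EuclideanSpace ℝ (Fin d)))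
    (hA : MeasurableSet A) (x δ : EuclideanSpace ℝ (Fin d)) (hδ : ‖δ‖ < ε)
    (h : p ≤ ((gaussVec d σ) {G | x + G ∈ A}).toReal) :
    Phi (PhiInv p - ε / σ) ≤ ((gaussVec d σ) {G | x + δ + G ∈ A}).toReal := by
  haveI : ∀ i : Fin d, IsProbabilityMeasure (gaussianReal 0 (⟨σ ^ 2, sq_nonneg σ⟩ : ℝ≥0)) := fun _ =>
    inferInstanceAs (IsProbabilityMeasure (gaussianReal 0 (NNReal.mk (σ ^ 2) (sq_nonneg σ))))
  haveI hprob : IsProbabilityMeasure (gaussVec d σ) :=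
    Measure.isProbabilityMeasure_map
      (MeasurableEquiv.toLp 2 (Fin d → ℝ)).measurable.aemeasurable
  by_cases hδ0 : δ = 0
  · rw [hδ0]
    simp only [add_zero]
    calc Phi (PhiInv p - ε / σ)
        ≤ Phi (PhiInv p) := Phi_mono (by
          have : 0 ≤ ε / σ := le_of_lt (div_pos hε hσ)
          linarith)
      _ = p := Phi_PhiInv hp hp1
      _ ≤ _ := h
  · have hδn : ‖δ‖ ≠ 0 := norm_ne_zero_iff.mpr hδ0
    have hd : 0 < d := by
      rcases Nat.eq_zero_or_pos d with hd0 | hd0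
      · subst hd0
        exact absurd (PiLp.ext fun i : Fin 0 => i.elim0 : δ = 0) hδ0
      · exact hd0
    set i₀ : Fin d := ⟨0, hd⟩
    set u : EuclideanSpace ℝ (Fin d) := ‖δ‖⁻¹ • δ with hu_def
    have hu : ‖u‖ = 1 := by
      rw [hu_def, norm_smul, norm_inv, norm_norm, inv_mul_cancel₀ hδn]
    have horth : Orthonormal ℝ (({i₀} : Set (Fin d)).restrict fun _ : Fin d => u) := by
      rw [orthonormal_iff_ite]
      intro i j
      have hij : i = j := Subtype.ext ((Set.mem_singleton_iff.mp i.2).trans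
        (Set.mem_singleton_iff.mp j.2).symm)
      subst hij
      have huu : (inner ℝ u u : ℝ) = 1 := by
        rw [real_inner_self_eq_norm_sq, hu]; norm_num
      rw [if_pos rfl]; exact huu
    obtain ⟨b, hb⟩ := horth.exists_orthonormalBasis_extension_of_card_eq
      (by simp)
    have hbi₀ : b i₀ = u := hb i₀ rfl
    have hδu : δ = ‖δ‖ • u := by
      rw [hu_def, smul_smul, mul_inv_cancel₀ hδn, one_smul]
    have hTδ : b.repr δ = ‖δ‖ • EuclideanSpace.single i₀ (1:ℝ) := by
      rw [show b.repr δ = b.repr (‖δ‖ • u) from congrArg _ hδu,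
        LinearIsometryEquiv.map_smul, ← hbi₀, OrthonormalBasis.repr_self]
    have hinv := gaussVec_map_isometry d hσ b.repr
    have key : ∀ S : Set (EuclideanSpace ℝ (Fin d)), MeasurableSet S →
        gaussVec d σ S = gaussVec d σ (⇑b.repr.symm ⁻¹' S) := by
      intro S hS
      have hms : MeasurableSet (⇑b.repr.symm ⁻¹' S) :=
        b.repr.symm.continuous.measurable hS
      conv_rhs => rw [← hinv]
      rw [Measure.map_apply b.repr.continuous.measurable hms]
      congr 1
      ext g
      simp
    set S₁ : Set (EuclideanSpace ℝ (Fin d)) := (fun G => x + G) ⁻¹' A with hS₁def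
    set S₂ : Set (EuclideanSpace ℝ (Fin d)) := (fun G => x + δ + G) ⁻¹' A with hS₂def
    have hS₁ : MeasurableSet S₁ := hA.preimage (measurable_id.const_add x)
    have hS₂ : MeasurableSet S₂ := hA.preimage (measurable_id.const_add (x + δ))
    set Bset : Set (EuclideanSpace ℝ (Fin d)) := ⇑b.repr.symm ⁻¹' S₁ with hBdef
    have hBm : MeasurableSet Bset := b.repr.symm.continuous.measurable hS₁
    have h₁ : gaussVec d σ S₁ = gaussVec d σ Bset := key S₁ hS₁
    have h₂ : gaussVec d σ S₂ = gaussVec d σ (⇑b.repr.symm ⁻¹' S₂) := key S₂ hS₂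
    have hset : ⇑b.repr.symm ⁻¹' S₂ = (fun g => g + b.repr δ) ⁻¹' Bset := by
      ext g
      simp only [Set.mem_preimage, hBdef, hS₁def, hS₂def]
      have heq : x + (b.repr.symm (g + b.repr δ)) = x + δ + b.repr.symm g := by
        rw [map_add, LinearIsometryEquiv.symm_apply_apply, add_comm (b.repr.symm g) δ,
          ← add_assoc]
      rw [heq]
    set e := (MeasurableEquiv.toLp 2 (Fin d → ℝ)).symm with he
    set vNN : ℝ≥0 := (⟨σ ^ 2, sq_nonneg σ⟩ : ℝ≥0) with hvNN
    have hμapply : ∀ S : Set (EuclideanSpace ℝ (Fin d)), MeasurableSet S →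
        gaussVec d σ S = (Measure.pi fun _ : Fin d => gaussianReal 0 vNN) (⇑e.symm ⁻¹' S) :=
      fun S hS => Measure.map_apply e.symm.measurable hS
    have hyp' : ENNReal.ofReal p ≤
        (Measure.pi fun _ : Fin d => gaussianReal 0 vNN) (⇑e.symm ⁻¹' Bset) := by
      rw [← hμapply Bset hBm, ← h₁]
      exact ENNReal.ofReal_le_of_le_toReal h
    have main := main_pi vNN (vne hσ) i₀ (norm_nonneg δ) hp hp1 (⇑e.symm ⁻¹' Bset)
      (e.symm.measurable hBm) hyp'
    have hsetpi : (fun g : Fin d → ℝ => g + fun i => if i = i₀ then ‖δ‖ else 0) ⁻¹'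
        (⇑e.symm ⁻¹' Bset) = ⇑e.symm ⁻¹' ((fun g => g + b.repr δ) ⁻¹' Bset) := by
      ext g
      simp only [Set.mem_preimage]
      have hadd : (e.symm (g + fun i => if i = i₀ then ‖δ‖ else 0)
          : EuclideanSpace ℝ (Fin d)) = e.symm g + b.repr δ := by
        refine PiLp.ext fun j => ?_
        rw [hTδ]
        show (g j + if j = i₀ then ‖δ‖ else 0) =
          g j + (‖δ‖ • EuclideanSpace.single i₀ (1:ℝ)) j
        simp [EuclideanSpace.single_apply, PiLp.smul_apply]
      rw [hadd]
    have hmeas2 : MeasurableSet ((fun g => g + b.repr δ) ⁻¹' Bset) := by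
      rw [← hset]; exact b.repr.symm.continuous.measurable hS₂
    rw [hsetpi, ← hμapply _ hmeas2, ← hset, ← h₂] at main
    have hsq : Real.sqrt (vNN : ℝ) = σ := by
      rw [hvNN]; exact Real.sqrt_sq hσ.le
    rw [hsq] at main
    calc Phi (PhiInv p - ε / σ) ≤ Phi (PhiInv p - ‖δ‖ / σ) :=
        Phi_mono (sub_le_sub_left ((div_le_div_iff_of_pos_right hσ).mpr hδ.le) _)
      _ ≤ _ := (ENNReal.ofReal_le_iff_le_toReal (measure_ne_top _ _)).mp main
end
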